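/- Let k ≥ 3 and V homogeneous of degree k with real coefficients, g(x,y) = −x²/2 − y²/2 + V(x,y). Suppose (x,y) ∈ ℝ² with x²+y²=1, V(x,y) ≠ 0, ℓ ∈ ℂ* with ℓ^{2-k} = kV(x,y), and (w,z) = (ℓx, ℓy). Then det H_g(w,z) = −B(x,y)·(k−2)/k, where H_g is the Hessian matrix of g and B(x,y) = k² − (∂²V/∂x²(x,y) + ∂²V/∂y²(x,y))/V(x,y). -/

import Mathlib

open MvPolynomial

lemma deg2 (d : Fin 2 →₀ ℕ) : d.degree = d 0 + d 1 := by
  rw [Finsupp.degree, ← Fin.sum_univ_two (f := fun i => d i)]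
  exact Finset.sum_subset (Finset.subset_univ _)
    (fun i _ hi => Finsupp.notMem_support_iff.mp hi)

lemma homog_deg {φ : MvPolynomial (Fin 2) ℝ} {n : ℕ} (h : φ.IsHomogeneous n)
    {d : Fin 2 →₀ ℕ} (hd : coeff d φ ≠ 0) : d.degree = n := by
  have := h hd
  rwa [Finsupp.degree_eq_weight_one]

lemma scale2 {φ : MvPolynomial (Fin 2) ℝ} {n : ℕ} (h : φ.IsHomogeneous n)
    (c : ℂ) (v : Fin 2 → ℂ) :
    aeval (fun i => c * v i) φ = c ^ n * aeval v φ := by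
  conv_lhs => rw [φ.as_sum]
  conv_rhs => rw [φ.as_sum]
  rw [map_sum, map_sum, Finset.mul_sum]
  refine Finset.sum_congr rfl fun d hd => ?_
  have hdeg : d.degree = n := homog_deg h (mem_support_iff.mp hd)
  rw [aeval_monomial, aeval_monomial, Finsupp.prod, Finsupp.prod]
  have : (∏ i ∈ d.support, (c * v i) ^ d i)
      = c ^ n * ∏ i ∈ d.support, (v i) ^ d i := by
    rw [← hdeg, Finsupp.degree]
    show _ = c ^ (∑ i ∈ d.support, d i) * _
    rw [← Finset.prod_pow_eq_pow_sum, ← Finset.prod_mul_distrib]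
    exact Finset.prod_congr rfl fun i _ => mul_pow _ _ _
  rw [this]; ring

lemma X_mul_pd (i : Fin 2) (d : Fin 2 →₀ ℕ) (r : ℝ) :
    X i * monomial (d - Finsupp.single i 1) (r * d i) = monomial d (r * d i) := by
  by_cases h0 : d i = 0
  · simp [h0]
  · rw [X, monomial_mul, one_mul]
    congr 1
    rw [add_tsub_cancel_of_le]
    exact Finsupp.single_le_iff.mpr (Nat.one_le_iff_ne_zero.mpr h0)

lemma euler2 {φ : MvPolynomial (Fin 2) ℝ} {n : ℕ} (h : φ.IsHomogeneous n) :
    X 0 * pderiv 0 φ + X 1 * pderiv 1 φ = n • φ := by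
  conv_lhs => rw [φ.as_sum]
  conv_rhs => rw [φ.as_sum]
  rw [map_sum, map_sum, Finset.mul_sum, Finset.mul_sum, Finset.smul_sum,
    ← Finset.sum_add_distrib]
  refine Finset.sum_congr rfl fun d hd => ?_
  have hdeg : d.degree = n := homog_deg h (mem_support_iff.mp hd)
  rw [pderiv_monomial, pderiv_monomial, X_mul_pd, X_mul_pd, smul_monomial,
    ← map_add]
  congr 1
  have : d 0 + d 1 = n := by rw [← deg2, hdeg]
  push_cast [← this]
  ring

lemma pd_homog {φ : MvPolynomial (Fin 2) ℝ} {n : ℕ} (h : φ.IsHomogeneous n)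
    (i : Fin 2) : (pderiv i φ).IsHomogeneous (n - 1) := by
  conv_lhs => rw [φ.as_sum]
  rw [map_sum]
  refine IsHomogeneous.sum _ _ _ fun d hd => ?_
  have hdeg : d.degree = n := homog_deg h (mem_support_iff.mp hd)
  rw [pderiv_monomial]
  by_cases h0 : d i = 0
  · rw [h0, Nat.cast_zero, mul_zero, map_zero]
    exact isHomogeneous_zero _ _ _
  · have hi : i = 0 ∨ i = 1 := by fin_cases i <;> simp
    refine isHomogeneous_monomial _ ?_
    have h1 : 1 ≤ d i := Nat.one_le_iff_ne_zero.mpr h0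
    rw [deg2] at hdeg ⊢
    rw [Finsupp.tsub_apply, Finsupp.tsub_apply]
    rcases hi with rfl | rfl <;> simp only [Finsupp.single_apply] <;> simp <;> omega

lemma pd_comm (φ : MvPolynomial (Fin 2) ℝ) :
    pderiv 0 (pderiv 1 φ) = pderiv 1 (pderiv 0 φ) := by
  induction φ using MvPolynomial.induction_on' with
  | monomial d r =>
    simp only [pderiv_monomial]
    have h01 : (d - Finsupp.single 1 1 : Fin 2 →₀ ℕ) 0 = d 0 := by
      rw [Finsupp.tsub_apply, Finsupp.single_eq_of_ne' (by decide)]; omega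
    have h10 : (d - Finsupp.single 0 1 : Fin 2 →₀ ℕ) 1 = d 1 := by
      rw [Finsupp.tsub_apply, Finsupp.single_eq_of_ne' (by decide)]; omega
    have hfin : d - Finsupp.single 1 1 - Finsupp.single 0 1
        = d - Finsupp.single 0 1 - Finsupp.single 1 1 := by
      ext j
      rw [Finsupp.tsub_apply, Finsupp.tsub_apply, Finsupp.tsub_apply, Finsupp.tsub_apply]
      omega
    rw [h01, h10, hfin, mul_right_comm]
  | add p q hp hq => simp [map_add, hp, hq]


/-- Hessian determinant identity: with `V` homogeneous of degree `k ≥ 3`,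
`g = -x²/2 - y²/2 + V`, `(x,y)` a critical point of `V` on the unit circle with
`V(x,y) ≠ 0`, `ℓ^{2-k} = k V(x,y)` and `(w,z) = (ℓx, ℓy)`, one has
`det H_g(w,z) = -B(x,y)·(k-2)/k` where
`B(x,y) = k² - (V_{xx}(x,y)+V_{yy}(x,y))/V(x,y)`. -/
theorem hessian_det_identity (k : ℕ) (hk : 3 ≤ k)
    (V : MvPolynomial (Fin 2) ℝ) (hV : V.IsHomogeneous k)
    (x y : ℝ) (hxy : x ^ 2 + y ^ 2 = 1)
    (hVne : eval ![x, y] V ≠ 0)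
    (hcrit : y * eval ![x, y] (pderiv 0 V) = x * eval ![x, y] (pderiv 1 V))
    (l : ℂ) (hl : l ≠ 0)
    (hpow : l ^ ((2 : ℤ) - (k : ℤ)) = (k : ℂ) * ((eval ![x, y] V : ℝ) : ℂ)) :
    (-1 + aeval ![l * (x : ℂ), l * (y : ℂ)] (pderiv 0 (pderiv 0 V)))
        * (-1 + aeval ![l * (x : ℂ), l * (y : ℂ)] (pderiv 1 (pderiv 1 V)))
      - (aeval ![l * (x : ℂ), l * (y : ℂ)] (pderiv 1 (pderiv 0 V))) ^ 2
    = -((((k : ℝ) ^ 2 -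
          (eval ![x, y] (pderiv 0 (pderiv 0 V)) + eval ![x, y] (pderiv 1 (pderiv 1 V)))
            / eval ![x, y] V : ℝ)) : ℂ) * ((k : ℂ) - 2) / (k : ℂ) := by
  set V0 := eval ![x, y] V with hV0def
  set Vx := eval ![x, y] (pderiv 0 V) with hVxdef
  set Vy := eval ![x, y] (pderiv 1 V) with hVydef
  set a := eval ![x, y] (pderiv 0 (pderiv 0 V)) with hadef
  set b := eval ![x, y] (pderiv 1 (pderiv 0 V)) with hbdef
  set c := eval ![x, y] (pderiv 1 (pderiv 1 V)) with hcdef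
  -- Euler identities
  have E0 : x * Vx + y * Vy = (k : ℝ) * V0 := by
    have h := congrArg (eval ![x, y]) (euler2 hV)
    simpa [nsmul_eq_mul, mul_comm] using h
  have E1 : x * a + y * b = ((k : ℝ) - 1) * Vx := by
    have h := congrArg (eval ![x, y]) (euler2 (pd_homog hV 0))
    have hc : ((k - 1 : ℕ) : ℝ) = (k : ℝ) - 1 := by
      push_cast [Nat.cast_sub (by omega : 1 ≤ k)]; ring
    simpa [nsmul_eq_mul, hc] using h
  have E2 : x * b + y * c = ((k : ℝ) - 1) * Vy := by
    have h := congrArg (eval ![x, y]) (euler2 (pd_homog hV 1))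
    have hc : ((k - 1 : ℕ) : ℝ) = (k : ℝ) - 1 := by
      push_cast [Nat.cast_sub (by omega : 1 ≤ k)]; ring
    rw [pd_comm] at h
    simpa [nsmul_eq_mul, hc] using h
  have hVx : Vx = (k : ℝ) * V0 * x := by linear_combination x * E0 + y * hcrit - Vx * hxy
  have hVy : Vy = (k : ℝ) * V0 * y := by linear_combination y * E0 - x * hcrit - Vy * hxy
  have F1 : x * a + y * b = (k : ℝ) * ((k : ℝ) - 1) * V0 * x := by
    linear_combination E1 + ((k : ℝ) - 1) * hVx
  have F2 : x * b + y * c = (k : ℝ) * ((k : ℝ) - 1) * V0 * y := by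
    linear_combination E2 + ((k : ℝ) - 1) * hVy
  have key : (a - (k : ℝ) * V0) * (c - (k : ℝ) * V0) - b ^ 2
      = -((k : ℝ) * ((k : ℝ) - 2) * V0 * ((k : ℝ) ^ 2 * V0 - a - c)) := by
    linear_combination
      ((c - (k : ℝ) * ((k : ℝ) - 1) * V0) * x - b * y) * F1
      + ((a - (k : ℝ) * ((k : ℝ) - 1) * V0) * y - b * x) * F2
      - ((a - (k : ℝ) * ((k : ℝ) - 1) * V0) * (c - (k : ℝ) * ((k : ℝ) - 1) * V0) - b ^ 2) * hxy
  -- complex side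
  have hk0 : (k : ℂ) ≠ 0 := Nat.cast_ne_zero.mpr (by omega)
  have hV0C : (V0 : ℂ) ≠ 0 := Complex.ofReal_ne_zero.mpr hVne
  have hlk : l ^ (k - 2) = ((k : ℂ) * (V0 : ℂ))⁻¹ := by
    have h2 : ((2 : ℤ) - (k : ℤ)) = -((k - 2 : ℕ) : ℤ) := by
      push_cast [Nat.cast_sub (by omega : 2 ≤ k)]; ring
    rw [h2, zpow_neg, zpow_natCast] at hpow
    rw [← hpow] at *
    exact (inv_inv _).symm
  have castv : (fun i => ((![x, y] i : ℝ) : ℂ)) = ![(x : ℂ), (y : ℂ)] := by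
    funext i; fin_cases i <;> simp
  have mulvec : ∀ P : MvPolynomial (Fin 2) ℝ, P.IsHomogeneous (k - 2) →
      aeval ![l * (x : ℂ), l * (y : ℂ)] P
        = ((k : ℂ) * (V0 : ℂ))⁻¹ * ((eval ![x, y] P : ℝ) : ℂ) := by
    intro P hP
    have h1 : ![l * (x : ℂ), l * (y : ℂ)] = fun i => l * (![(x : ℂ), (y : ℂ)] i) := by
      funext i; fin_cases i <;> simp
    rw [h1, scale2 hP, hlk]
    congr 1
    have h3 := eval₂_comp_left (algebraMap ℝ ℂ) (RingHom.id ℝ) ![x, y] P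
    rw [RingHom.comp_id] at h3
    rw [aeval_def, ← castv]
    rw [show (fun i => ((![x, y] i : ℝ) : ℂ)) = ⇑(algebraMap ℝ ℂ) ∘ ![x, y] from rfl, ← h3]
    rfl
  have hk2 : k - 1 - 1 = k - 2 := by omega
  have h00 : (pderiv 0 (pderiv 0 V)).IsHomogeneous (k - 2) := by
    rw [← hk2]; exact pd_homog (pd_homog hV 0) 0
  have h10 : (pderiv 1 (pderiv 0 V)).IsHomogeneous (k - 2) := by
    rw [← hk2]; exact pd_homog (pd_homog hV 0) 1
  have h11 : (pderiv 1 (pderiv 1 V)).IsHomogeneous (k - 2) := by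
    rw [← hk2]; exact pd_homog (pd_homog hV 1) 1
  rw [mulvec _ h00, mulvec _ h10, mulvec _ h11]
  rw [← hadef, ← hbdef, ← hcdef]
  have keyC := congrArg (Complex.ofReal) key
  push_cast at keyC ⊢
  have hμ : ((k : ℂ) * (V0 : ℂ))⁻¹ * ((k : ℂ) * (V0 : ℂ)) = 1 :=
    inv_mul_cancel₀ (mul_ne_zero hk0 hV0C)
  have hLHS : (-1 + ((k : ℂ) * (V0 : ℂ))⁻¹ * (a : ℂ)) * (-1 + ((k : ℂ) * (V0 : ℂ))⁻¹ * (c : ℂ))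
        - (((k : ℂ) * (V0 : ℂ))⁻¹ * (b : ℂ)) ^ 2
      = (((a : ℂ) - (k : ℂ) * (V0 : ℂ)) * ((c : ℂ) - (k : ℂ) * (V0 : ℂ)) - (b : ℂ) ^ 2)
          * (((k : ℂ) * (V0 : ℂ))⁻¹) ^ 2 := by
    linear_combination (((k : ℂ) * (V0 : ℂ))⁻¹ * ((a : ℂ) + (c : ℂ))
      - ((k : ℂ) * (V0 : ℂ))⁻¹ * ((k : ℂ) * (V0 : ℂ)) - 1) * hμ
  have hid : -((k : ℂ) * ((k : ℂ) - 2) * (V0 : ℂ) * ((k : ℂ) ^ 2 * (V0 : ℂ) - (a : ℂ) - (c : ℂ)))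
        * (((k : ℂ) * (V0 : ℂ))⁻¹) ^ 2
      = -(((k : ℂ) ^ 2 - ((a : ℂ) + (c : ℂ)) / (V0 : ℂ))) * ((k : ℂ) - 2) / (k : ℂ) := by
    field_simp
    ring
  linear_combination hLHS + (((k : ℂ) * (V0 : ℂ))⁻¹) ^ 2 * keyC + hid
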